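/- Let f, g : [a,b] → ℝ be continuous on [a,b] and differentiable on (a,b), with g' nonvanishing on (a,b). If f'/g' is increasing on (a,b), then the functions x ↦ (f(x)−f(a))/(g(x)−g(a)) and x ↦ (f(x)−f(b))/(g(x)−g(b)) are increasing on (a,b). -/

import Mathlib

/-!
By Cauchy's mean value theorem every secant ratio `(f v - f u) / (g v - g u)` with `u < v`
equals `f' / g'` at a point of `(u, v)`, so for `u < v < w` the ratio over `[u, v]` is at most
the ratio over `[v, w]`. By Darboux, `g'` has constant sign, so `g` is strictly monotone and the
ratio over `[u, w]` is the mediant of these two with denominators of equal sign; hence it lies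
between them. Taking `u = a` gives the first claim, `w = b` the second.
-/

open Set

lemma add_div_add_mem_Icc_of_div_le {K : Type*} [Field K] [LinearOrder K] [IsStrictOrderedRing K]
    {p q A B : K} (hAB : 0 < A * B) (h : p / A ≤ q / B) :
    (p + q) / (A + B) ∈ Icc (p / A) (q / B) := by
  wlog hA : 0 < A generalizing p q A B
  · have key := this (p := -p) (q := -q) (A := -A) (B := -B)
      (by rwa [neg_mul_neg]) (by rwa [neg_div_neg_eq, neg_div_neg_eq])
      (neg_pos.2 ((pos_and_pos_or_neg_and_neg_of_mul_pos hAB).resolve_left fun h ↦ hA h.1).1)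
    rwa [← neg_add, ← neg_add, neg_div_neg_eq, neg_div_neg_eq, neg_div_neg_eq] at key
  have hB : 0 < B := pos_of_mul_pos_right hAB hA.le
  rw [div_le_div_iff₀ hA hB] at h
  constructor
  · rw [div_le_div_iff₀ hA (by positivity)]; nlinarith
  · rw [div_le_div_iff₀ (by positivity) hB]; nlinarith

section

variable {f g f' g' : ℝ → ℝ} {a b u v w : ℝ}

lemma strictMonoOn_or_strictAntiOn_of_hasDerivAt_ne_zero (hg : ContinuousOn g (Icc a b))
    (hg' : ∀ x ∈ Ioo a b, HasDerivAt g (g' x) x) (hg'ne : ∀ x ∈ Ioo a b, g' x ≠ 0) :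
    StrictMonoOn g (Icc a b) ∨ StrictAntiOn g (Icc a b) := by
  have hg'within : ∀ x ∈ Ioo a b, HasDerivWithinAt g (g' x) (Ioo a b) x :=
    fun x hx ↦ (hg' x hx).hasDerivWithinAt
  rcases hasDerivWithinAt_forall_lt_or_forall_gt_of_forall_ne (convex_Ioo a b) hg'within hg'ne
    with hneg | hpos
  · refine .inr (strictAntiOn_of_hasDerivWithinAt_neg (f' := g') (convex_Icc a b) hg ?_ ?_) <;>
      rwa [interior_Icc]
  · refine .inl (strictMonoOn_of_hasDerivWithinAt_pos (f' := g') (convex_Icc a b) hg ?_ ?_) <;>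
      rwa [interior_Icc]

lemma sub_mul_sub_pos_of_strictMonoOn_or_strictAntiOn {s : Set ℝ}
    (hg : StrictMonoOn g s ∨ StrictAntiOn g s) (hu : u ∈ s) (hv : v ∈ s) (hw : w ∈ s)
    (huv : u < v) (hvw : v < w) : 0 < (g v - g u) * (g w - g v) := by
  rcases hg with hg | hg
  · exact mul_pos (sub_pos.2 (hg hu hv huv)) (sub_pos.2 (hg hv hw hvw))
  · exact mul_pos_of_neg_of_neg (sub_neg.2 (hg hu hv huv)) (sub_neg.2 (hg hv hw hvw))

lemma exists_mem_Ioo_div_sub_eq_div (huv : u < v)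
    (hf : ContinuousOn f (Icc u v)) (hg : ContinuousOn g (Icc u v))
    (hf' : ∀ x ∈ Ioo u v, HasDerivAt f (f' x) x) (hg' : ∀ x ∈ Ioo u v, HasDerivAt g (g' x) x)
    (hg'ne : ∀ x ∈ Ioo u v, g' x ≠ 0) :
    ∃ c ∈ Ioo u v, (f v - f u) / (g v - g u) = f' c / g' c := by
  have hguv : g v - g u ≠ 0 := fun h ↦ by
    obtain ⟨c, hc, hc0⟩ := exists_hasDerivAt_eq_zero huv hg (sub_eq_zero.1 h).symm hg'
    exact hg'ne c hc hc0
  obtain ⟨c, hc, hcf⟩ := exists_ratio_hasDerivAt_eq_ratio_slope f f' huv hf hf' g g' hg hg'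
  exact ⟨c, hc, (div_eq_div_iff hguv (hg'ne c hc)).2 (by linarith)⟩

lemma div_sub_le_div_sub_of_monotoneOn
    (hf : ContinuousOn f (Icc a b)) (hg : ContinuousOn g (Icc a b))
    (hf' : ∀ x ∈ Ioo a b, HasDerivAt f (f' x) x) (hg' : ∀ x ∈ Ioo a b, HasDerivAt g (g' x) x)
    (hg'ne : ∀ x ∈ Ioo a b, g' x ≠ 0) (hmono : MonotoneOn (fun x ↦ f' x / g' x) (Ioo a b))
    (hu : a ≤ u) (huv : u < v) (hvw : v < w) (hw : w ≤ b) :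
    (f v - f u) / (g v - g u) ≤ (f w - f v) / (g w - g v) := by
  have mvt : ∀ ⦃s t⦄, a ≤ s → s < t → t ≤ b →
      ∃ c ∈ Ioo s t, (f t - f s) / (g t - g s) = f' c / g' c := fun s t hs hst ht ↦
    have hsub : Ioo s t ⊆ Ioo a b := Ioo_subset_Ioo hs ht
    exists_mem_Ioo_div_sub_eq_div hst (hf.mono (Icc_subset_Icc hs ht))
      (hg.mono (Icc_subset_Icc hs ht)) (fun x hx ↦ hf' x (hsub hx)) (fun x hx ↦ hg' x (hsub hx))
      (fun x hx ↦ hg'ne x (hsub hx))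
  obtain ⟨c₁, hc₁, hc₁eq⟩ := mvt hu huv (hvw.trans_le hw).le
  obtain ⟨c₂, hc₂, hc₂eq⟩ := mvt (hu.trans huv.le) hvw hw
  rw [hc₁eq, hc₂eq]
  exact hmono ⟨hu.trans_lt hc₁.1, hc₁.2.trans (hvw.trans_le hw)⟩
    ⟨(hu.trans_lt huv).trans hc₂.1, hc₂.2.trans_le hw⟩ (hc₁.2.trans hc₂.1).le

end

theorem monotone_lhopital_rule (a b : ℝ) (f g f' g' : ℝ → ℝ)
    (hf : ContinuousOn f (Icc a b)) (hg : ContinuousOn g (Icc a b))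
    (hf' : ∀ x ∈ Ioo a b, HasDerivAt f (f' x) x)
    (hg' : ∀ x ∈ Ioo a b, HasDerivAt g (g' x) x)
    (hg'ne : ∀ x ∈ Ioo a b, g' x ≠ 0)
    (hmono : MonotoneOn (fun x => f' x / g' x) (Ioo a b)) :
    MonotoneOn (fun x => (f x - f a) / (g x - g a)) (Ioo a b) ∧
    MonotoneOn (fun x => (f x - f b) / (g x - g b)) (Ioo a b) := by
  have hgmono := strictMonoOn_or_strictAntiOn_of_hasDerivAt_ne_zero hg hg' hg'ne
  have mediant : ∀ ⦃u v w⦄, a ≤ u → u < v → v < w → w ≤ b → (f w - f u) / (g w - g u) ∈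
      Icc ((f v - f u) / (g v - g u)) ((f w - f v) / (g w - g v)) := fun u v w hu huv hvw hw ↦ by
    have hv : v ∈ Icc a b := ⟨hu.trans huv.le, hvw.le.trans hw⟩
    simpa only [sub_add_sub_cancel'] using add_div_add_mem_Icc_of_div_le
      (sub_mul_sub_pos_of_strictMonoOn_or_strictAntiOn hgmono ⟨hu, (huv.trans hvw).le.trans hw⟩
        hv ⟨hv.1.trans hvw.le, hw⟩ huv hvw)
      (div_sub_le_div_sub_of_monotoneOn hf hg hf' hg' hg'ne hmono hu huv hvw hw)
  refine ⟨monotoneOn_iff_forall_lt.2 fun x hx y hy hxy ↦ (mediant le_rfl hx.1 hxy hy.2.le).1,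
    monotoneOn_iff_forall_lt.2 fun x hx y hy hxy ↦ ?_⟩
  simpa only [← neg_sub (f b), ← neg_sub (g b), neg_div_neg_eq] using
    (mediant hx.1.le hxy hy.2 le_rfl).2
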